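/- Let G = (V,E) be a graph on n vertices with stabilizer generators g_i = X_i ∏_{k ∈ N(i)} Z_k. For every subset M ⊆ {1,…,n} and every x ∈ {0,1}^n there exists a sign ε(x) ∈ {+1,−1} such that (∏_{i=1}^n g_i^{x_i})^{T_M} = ε(x) ∏_{i=1}^n g_i^{x_i}. Moreover, if i is a vertex whose closed neighborhood N̄(i) = N(i) ∪ {i} satisfies N̄(i) ⊆ M or N̄(i) ⊆ M̄, then ε(x) is unchanged when the bit x_i is flipped. -/
import Mathlib


open Matrix Finset ComplexOrder

/-- Operators on `(ℂ²)^{⊗n}`, indexed by bit strings `{0,1}^n`. -/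
abbrev QMat (n : ℕ) := Matrix (Fin n → Fin 2) (Fin n → Fin 2) ℂ

/-- The tensor product `A 0 ⊗ ⋯ ⊗ A (n-1)` of one-qubit operators. -/
def qtensor {n : ℕ} (A : Fin n → Matrix (Fin 2) (Fin 2) ℂ) : QMat n :=
  fun v w => ∏ a, A a (v a) (w a)

/-- The Pauli matrix X. -/
def PX : Matrix (Fin 2) (Fin 2) ℂ := !![0, 1; 1, 0]

/-- The Pauli matrix Z. -/
def PZ : Matrix (Fin 2) (Fin 2) ℂ := !![1, 0; 0, -1]

/-- Partial transpose on the qubits in `M`: the row and column indices belonging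
to `M` are swapped. -/
def qpt {n : ℕ} (M : Finset (Fin n)) (X : QMat n) : QMat n :=
  fun v w => X (fun a => if a ∈ M then w a else v a) (fun a => if a ∈ M then v a else w a)

/-- The stabilizer generator `g_i = X_i ∏_{k ∈ N(i)} Z_k` of the graph `G`. -/
def gGen {n : ℕ} (G : SimpleGraph (Fin n)) [DecidableRel G.Adj] (i : Fin n) : QMat n :=
  qtensor (fun a => if a = i then PX else if G.Adj i a then PZ else 1)

/-- The product `∏_{i=1}^n g_i^{x_i}` of stabilizer generators. -/
noncomputable def gProd {n : ℕ} (G : SimpleGraph (Fin n)) [DecidableRel G.Adj]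
    (x : Fin n → Fin 2) : QMat n :=
  ((List.finRange n).map (fun i => gGen G i ^ (x i : ℕ))).prod

namespace PT

variable {n : ℕ}

lemma qtensor_mul (A B : Fin n → Matrix (Fin 2) (Fin 2) ℂ) :
    qtensor A * qtensor B = qtensor (fun a => A a * B a) := by
  funext v w
  simp only [qtensor, Matrix.mul_apply]
  rw [Finset.prod_univ_sum (fun _ => (univ : Finset (Fin 2)))
    (fun a j => A a (v a) j * B a j (w a)), Fintype.piFinset_univ]
  exact Finset.sum_congr rfl fun u _ => (Finset.prod_mul_distrib).symm

lemma qtensor_one : qtensor (fun _ : Fin n => (1 : Matrix (Fin 2) (Fin 2) ℂ)) = 1 := by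
  funext v w
  simp only [qtensor, Matrix.one_apply, Finset.prod_boole]
  by_cases h : v = w
  · simp [h]
  · rw [if_neg h, if_neg (fun hh => h (funext fun a => hh a (mem_univ a)))]

lemma qtensor_pow (A : Fin n → Matrix (Fin 2) (Fin 2) ℂ) (k : ℕ) :
    qtensor A ^ k = qtensor (fun a => A a ^ k) := by
  induction k with
  | zero => simp [qtensor_one]
  | succ k ih => simp only [pow_succ, ih, qtensor_mul, pow_succ]

lemma qtensor_list_prod {ι : Type*} (l : List ι) (f : ι → Fin n → Matrix (Fin 2) (Fin 2) ℂ) :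
    ((l.map fun i => qtensor (f i)).prod) = qtensor (fun a => (l.map fun i => f i a).prod) := by
  induction l with
  | nil => simp [qtensor_one]
  | cons i l ih => simp only [List.map_cons, List.prod_cons, ih, qtensor_mul]

lemma qtensor_smul (c : Fin n → ℂ) (A : Fin n → Matrix (Fin 2) (Fin 2) ℂ) :
    qtensor (fun a => c a • A a) = (∏ a, c a) • qtensor A := by
  funext v w
  simp only [qtensor, Matrix.smul_apply, smul_eq_mul, Finset.prod_mul_distrib]

lemma qpt_qtensor (M : Finset (Fin n)) (A : Fin n → Matrix (Fin 2) (Fin 2) ℂ) :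
    qpt M (qtensor A) = qtensor (fun a => if a ∈ M then (A a)ᵀ else A a) := by
  funext v w
  simp only [qpt, qtensor]
  refine Finset.prod_congr rfl fun a _ => ?_
  by_cases h : a ∈ M <;> simp [h, Matrix.transpose_apply]

lemma PX_mul_PX : PX * PX = 1 := by
  ext i j
  fin_cases i <;> fin_cases j <;>
    simp [PX, Matrix.mul_apply, Fin.sum_univ_two, Matrix.one_apply]

lemma PZ_mul_PX : PZ * PX = -(PX * PZ) := by
  ext i j
  fin_cases i <;> fin_cases j <;>
    simp [PX, PZ, Matrix.mul_apply, Fin.sum_univ_two, Matrix.neg_apply]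

lemma PX_transpose : PXᵀ = PX := by
  ext i j; fin_cases i <;> fin_cases j <;> simp [PX, Matrix.transpose_apply]

lemma PZ_transpose : PZᵀ = PZ := by
  ext i j; fin_cases i <;> fin_cases j <;> simp [PZ, Matrix.transpose_apply]

lemma PZ_mul_PXpow (b : ℕ) : PZ * PX ^ b = ((-1 : ℂ) ^ b) • (PX ^ b * PZ) := by
  induction b with
  | zero => simp
  | succ b ih =>
    rw [pow_succ, ← mul_assoc, ih, smul_mul_assoc, mul_assoc, PZ_mul_PX, mul_neg, smul_neg,
      ← mul_assoc]
    rw [pow_succ (-1 : ℂ) b, mul_neg_one, neg_smul]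

lemma PZpow_mul_PXpow (b c : ℕ) :
    PZ ^ c * PX ^ b = ((-1 : ℂ) ^ (b * c)) • (PX ^ b * PZ ^ c) := by
  induction c with
  | zero => simp
  | succ c ih =>
    rw [pow_succ, mul_assoc, PZ_mul_PXpow, mul_smul_comm, ← mul_assoc, ih, smul_mul_assoc,
      smul_smul, ← pow_add, mul_assoc, ← pow_succ]
    congr 2
    ring


lemma neg_one_pow_sign (k : ℕ) : ((-1 : ℂ) ^ k = 1 ∨ (-1 : ℂ) ^ k = -1) := by
  rcases Nat.even_or_odd k with h | h
  · exact Or.inl h.neg_one_pow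
  · exact Or.inr h.neg_one_pow

lemma sign_mul {s t : ℂ} (hs : s = 1 ∨ s = -1) (ht : t = 1 ∨ t = -1) :
    s * t = 1 ∨ s * t = -1 := by
  rcases hs with h | h <;> rcases ht with h' | h' <;> simp [h, h']

variable (G : SimpleGraph (Fin n)) [DecidableRel G.Adj]

lemma site_normal (a : Fin n) (x : Fin n → Fin 2) (l : List (Fin n)) :
    ∃ s : ℂ, (s = 1 ∨ s = -1) ∧
      (l.map (fun i => (if a = i then PX else if G.Adj i a then PZ else 1) ^ (x i : ℕ))).prod
        = s • (PX ^ (l.map (fun i => if a = i then (x i : ℕ) else 0)).sum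
             * PZ ^ (l.map (fun i => if G.Adj i a then (x i : ℕ) else 0)).sum) := by
  induction l with
  | nil => exact ⟨1, Or.inl rfl, by simp⟩
  | cons i l ih =>
    obtain ⟨s, hs, hprod⟩ := ih
    have hlt := (x i).isLt
    have hxi : (x i : ℕ) = 0 ∨ (x i : ℕ) = 1 := by omega
    by_cases hai : a = i
    · have hadj : ¬ G.Adj i a := by rw [hai]; exact G.irrefl
      rcases hxi with h0 | h1
      · refine ⟨s, hs, ?_⟩
        simp only [List.map_cons, List.prod_cons, List.sum_cons, hprod, if_pos hai,
          if_neg hadj, h0, pow_zero, one_mul, zero_add]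
      · refine ⟨s, hs, ?_⟩
        simp only [List.map_cons, List.prod_cons, List.sum_cons, hprod, if_pos hai,
          if_neg hadj, h1, pow_one, zero_add]
        rw [mul_smul_comm, ← mul_assoc, ← pow_succ', add_comm 1]
    · by_cases hadj : G.Adj i a
      · rcases hxi with h0 | h1
        · refine ⟨s, hs, ?_⟩
          simp only [List.map_cons, List.prod_cons, List.sum_cons, hprod, if_neg hai,
            if_pos hadj, h0, pow_zero, one_mul, zero_add]
        · refine ⟨s * (-1) ^ (l.map (fun i => if a = i then (x i : ℕ) else 0)).sum,
            sign_mul hs (neg_one_pow_sign _), ?_⟩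
          simp only [List.map_cons, List.prod_cons, List.sum_cons, hprod, if_neg hai,
            if_pos hadj, h1, pow_one, zero_add]
          rw [mul_smul_comm, ← mul_assoc, PZ_mul_PXpow, smul_mul_assoc, smul_smul,
            mul_assoc, ← pow_succ', add_comm 1]
      · rcases hxi with h | h <;> refine ⟨s, hs, ?_⟩ <;>
          simp only [List.map_cons, List.prod_cons, List.sum_cons, hprod, if_neg hai,
            if_neg hadj, h, pow_zero, pow_one, one_mul, zero_add]


noncomputable def siteFac (a : Fin n) (x : Fin n → Fin 2) : Matrix (Fin 2) (Fin 2) ℂ :=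
  ((List.finRange n).map
    (fun i => (if a = i then PX else if G.Adj i a then PZ else 1) ^ (x i : ℕ))).prod

noncomputable def epsSign (M : Finset (Fin n)) (x : Fin n → Fin 2) : ℂ :=
  ∏ a ∈ M, (-1 : ℂ) ^ ((x a : ℕ) * ∑ j ∈ G.neighborFinset a, (x j : ℕ))

lemma gProd_eq (x : Fin n → Fin 2) : gProd G x = qtensor (fun a => siteFac G a x) := by
  unfold gProd
  have h : (fun i => gGen G i ^ (x i : ℕ)) =
      fun i => qtensor (fun a =>
        (if a = i then PX else if G.Adj i a then PZ else 1) ^ (x i : ℕ)) := by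
    funext i; rw [gGen, qtensor_pow]
  rw [h, qtensor_list_prod]
  rfl

lemma site_transpose (a : Fin n) (x : Fin n → Fin 2) :
    (siteFac G a x)ᵀ =
      ((-1 : ℂ) ^ ((x a : ℕ) * ∑ j ∈ G.neighborFinset a, (x j : ℕ))) • siteFac G a x := by
  obtain ⟨s, hs, h⟩ := site_normal G a x (List.finRange n)
  have hB : ((List.finRange n).map (fun i => if a = i then (x i : ℕ) else 0)).sum
      = (x a : ℕ) := by
    rw [← Fin.sum_univ_def, Finset.sum_ite_eq, if_pos (Finset.mem_univ a)]
  have hC : ((List.finRange n).map (fun i => if G.Adj i a then (x i : ℕ) else 0)).sum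
      = ∑ j ∈ G.neighborFinset a, (x j : ℕ) := by
    rw [← Fin.sum_univ_def, SimpleGraph.neighborFinset_eq_filter, Finset.sum_filter]
    exact Finset.sum_congr rfl fun j _ => if_congr (G.adj_comm j a) rfl rfl
  rw [hB, hC] at h
  unfold siteFac
  rw [h, Matrix.transpose_smul, Matrix.transpose_mul, Matrix.transpose_pow,
    Matrix.transpose_pow, PX_transpose, PZ_transpose, PZpow_mul_PXpow, smul_comm]

lemma qpt_gProd (M : Finset (Fin n)) (x : Fin n → Fin 2) :
    qpt M (gProd G x) = epsSign G M x • gProd G x := by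
  rw [gProd_eq, qpt_qtensor]
  have h : (fun a => if a ∈ M then (siteFac G a x)ᵀ else siteFac G a x)
      = fun a => (if a ∈ M then
          (-1 : ℂ) ^ ((x a : ℕ) * ∑ j ∈ G.neighborFinset a, (x j : ℕ)) else 1) •
          siteFac G a x := by
    funext a
    by_cases hm : a ∈ M <;> simp [hm, site_transpose]
  rw [h, qtensor_smul]
  congr 1
  rw [Finset.prod_ite_mem, Finset.univ_inter]
  rfl

lemma epsSign_eq_pow (M : Finset (Fin n)) (x : Fin n → Fin 2) :
    epsSign G M x
      = (-1 : ℂ) ^ ∑ a ∈ M, (x a : ℕ) * ∑ j ∈ G.neighborFinset a, (x j : ℕ) := by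
  exact Finset.prod_pow_eq_pow_sum M _ _

lemma epsSign_sign (M : Finset (Fin n)) (x : Fin n → Fin 2) :
    epsSign G M x = 1 ∨ epsSign G M x = -1 := by
  rw [epsSign_eq_pow]; exact neg_one_pow_sign _


lemma neg_one_pow_congr {m k : ℕ} (h : (m : ZMod 2) = (k : ZMod 2)) :
    (-1 : ℂ) ^ m = (-1 : ℂ) ^ k := by
  have h2 := (ZMod.natCast_eq_natCast_iff m k 2).mp h
  rw [Nat.ModEq] at h2
  rcases Nat.even_or_odd m with hm | hm
  · have hk : Even k := by rw [Nat.even_iff] at *; omega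
    rw [hm.neg_one_pow, hk.neg_one_pow]
  · have hk : Odd k := by rw [Nat.odd_iff] at *; omega
    rw [hm.neg_one_pow, hk.neg_one_pow]

lemma epsSign_flip (M : Finset (Fin n)) (i : Fin n)
    (h : insert i (G.neighborFinset i) ⊆ M ∨ insert i (G.neighborFinset i) ⊆ Mᶜ)
    (x : Fin n → Fin 2) :
    epsSign G M (Function.update x i (x i + 1)) = epsSign G M x := by
  rw [epsSign_eq_pow, epsSign_eq_pow]
  apply neg_one_pow_congr
  set x' := Function.update x i (x i + 1) with hx'
  set y : (Fin n → Fin 2) → Fin n → ZMod 2 := fun z a => ((z a : ℕ) : ZMod 2) with hy'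
  have hcast : ∀ z : Fin n → Fin 2,
      ((∑ a ∈ M, (z a : ℕ) * ∑ j ∈ G.neighborFinset a, (z j : ℕ) : ℕ) : ZMod 2)
        = ∑ a ∈ M, y z a * ∑ j ∈ G.neighborFinset a, y z j := by
    intro z; push_cast; rfl
  rw [hcast, hcast]
  have hy : ∀ a, y x' a = y x a + (if a = i then 1 else 0) := by
    intro a
    by_cases ha : a = i
    · subst ha
      simp only [hy', hx', Function.update_self, if_pos rfl]
      rw [Fin.val_add, ZMod.natCast_mod]
      push_cast
      norm_num
    · simp [hy', hx', Function.update_of_ne ha, ha]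
  have hT : ∀ a, (∑ j ∈ G.neighborFinset a, y x' j)
      = (∑ j ∈ G.neighborFinset a, y x j)
        + (if i ∈ G.neighborFinset a then (1 : ZMod 2) else 0) := by
    intro a
    rw [Finset.sum_congr rfl (fun j _ => hy j), Finset.sum_add_distrib,
      Finset.sum_ite_eq']
  have hexpand : (∑ a ∈ M, y x' a * ∑ j ∈ G.neighborFinset a, y x' j)
      = (∑ a ∈ M, y x a * ∑ j ∈ G.neighborFinset a, y x j)
        + ((∑ a ∈ M, y x a * (if i ∈ G.neighborFinset a then 1 else 0))
          + ((∑ a ∈ M, (if a = i then (1 : ZMod 2) else 0)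
                * ∑ j ∈ G.neighborFinset a, y x j)
            + (∑ a ∈ M, (if a = i then (1 : ZMod 2) else 0)
                * (if i ∈ G.neighborFinset a then 1 else 0)))) := by
    rw [← Finset.sum_add_distrib, ← Finset.sum_add_distrib, ← Finset.sum_add_distrib]
    refine Finset.sum_congr rfl fun a _ => ?_
    rw [hy, hT]; ring
  rw [hexpand]
  have hB : (∑ a ∈ M, (if a = i then (1 : ZMod 2) else 0)
      * ∑ j ∈ G.neighborFinset a, y x j)
      = if i ∈ M then ∑ j ∈ G.neighborFinset i, y x j else 0 := by
    rw [Finset.sum_congr rfl fun a _ => by rw [ite_mul, one_mul, zero_mul],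
      Finset.sum_ite_eq']
  have hC : (∑ a ∈ M, (if a = i then (1 : ZMod 2) else 0)
      * (if i ∈ G.neighborFinset a then 1 else 0)) = 0 := by
    rw [Finset.sum_congr rfl fun a _ => by rw [ite_mul, one_mul, zero_mul],
      Finset.sum_ite_eq']
    simp [SimpleGraph.mem_neighborFinset]
  have hAmem : ∀ a, (i ∈ G.neighborFinset a) ↔ (a ∈ G.neighborFinset i) := by
    intro a
    simp only [SimpleGraph.mem_neighborFinset]
    exact G.adj_comm a i
  have hA : (∑ a ∈ M, y x a * (if i ∈ G.neighborFinset a then 1 else 0))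
      = ∑ a ∈ M ∩ G.neighborFinset i, y x a := by
    have step1 : (∑ a ∈ M, y x a * (if i ∈ G.neighborFinset a then 1 else 0))
        = ∑ a ∈ M, (if a ∈ G.neighborFinset i then y x a else 0) :=
      Finset.sum_congr rfl fun a _ => by
        rw [mul_ite, mul_one, mul_zero]
        exact if_congr (hAmem a) rfl rfl
    rw [step1, Finset.sum_ite_mem]
  rw [hA, hB, hC, add_zero]
  rcases h with hM | hM
  · obtain ⟨hiM, hNM⟩ := Finset.insert_subset_iff.mp hM
    rw [Finset.inter_eq_right.mpr hNM, if_pos hiM, CharTwo.add_self_eq_zero, add_zero]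
  · have hiM : i ∉ M := Finset.mem_compl.mp (hM (Finset.mem_insert_self i _))
    have hint : M ∩ G.neighborFinset i = ∅ := by
      refine Finset.eq_empty_of_forall_notMem fun a ha => ?_
      obtain ⟨haM, haN⟩ := Finset.mem_inter.mp ha
      exact (Finset.mem_compl.mp (hM (Finset.mem_insert_of_mem haN))) haM
    rw [hint, Finset.sum_empty, if_neg hiM, zero_add, add_zero]

end PT

/-- partial transposition only changes products of stabilizer generators
by a sign `ε(x) ∈ {±1}`, and the sign is insensitive to flipping a bit `x_i` whenever
the closed neighborhood of `i` lies entirely inside `M` or inside `M̄`. -/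
theorem partial_transpose_stabilizer_product_sign
    {n : ℕ} (G : SimpleGraph (Fin n)) [DecidableRel G.Adj] (M : Finset (Fin n)) :
    ∃ ε : (Fin n → Fin 2) → ℂ,
      (∀ x, ε x = 1 ∨ ε x = -1) ∧
      (∀ x, qpt M (gProd G x) = ε x • gProd G x) ∧
      (∀ i : Fin n,
        (insert i (G.neighborFinset i) ⊆ M ∨ insert i (G.neighborFinset i) ⊆ Mᶜ) →
        ∀ x, ε (Function.update x i (x i + 1)) = ε x) := by
  exact ⟨PT.epsSign G M, fun x => PT.epsSign_sign G M x, fun x => PT.qpt_gProd G M x,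
    fun i hi x => PT.epsSign_flip G M i hi x⟩
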